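/- arXiv:2007.04615 — 2 statements merged into one kernel-verified Lean document; each statement's English description precedes it below -/
import Mathlib

section
/- For the one-dimensional Gaussian φ(t) = e^{-π t²} and the chirp operator N_u f(t) = e^{-iπ u t²} f(t), the modulus of the short-time Fourier transform of N_u φ with window φ satisfies |S_φ(N_u φ)(x,ξ)| = (4+u²)^{-1/4} e^{-π x²/2} e^{-2π(ξ + u x/2)²/(4+u²)} for all x, ξ, u ∈ ℝ. -/
/-!
The integrand `(N_u φ)(t) φ(t - x) e^{-2πitξ}` is `exp (b t² + c t + d)` with
`b = -2π - iπu`, `c = 2πx - 2πiξ`, `d = -πx²`, so the complex Gaussian integral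
`∫ exp (b t² + c t + d) dt = (π / -b)^{1/2} exp (d - c² / 4b)` evaluates it in closed form.
Its modulus is `(π / |b|)^{1/2} e^{Re (d - c² / 4b)}`, and `|b| = π √(4 + u²)`.
-/

open Complex Real

theorem norm_integral_cexp_quadratic {b : ℂ} (hb : b.re < 0) (c d : ℂ) :
    ‖∫ x : ℝ, cexp (b * x ^ 2 + c * x + d)‖
      = (π / ‖b‖) ^ (1 / 2 : ℝ) * Real.exp (d - c ^ 2 / (4 * b)).re := by
  have hb0 : -b ≠ 0 := neg_ne_zero.mpr fun h => by simp [h] at hb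
  rw [integral_cexp_quadratic hb, norm_mul, norm_exp,
    norm_cpow_of_ne_zero (div_ne_zero (ofReal_ne_zero.mpr pi_ne_zero) hb0)]
  norm_num [norm_div, abs_of_pos pi_pos]

theorem chirped_gaussian_stft_integrand_eq (u x ξ t : ℝ) :
    (cexp (-(π * u * t ^ 2 : ℝ) * I) * cexp ((-(π * t ^ 2) : ℝ) : ℂ)) *
        (starRingEnd ℂ) (cexp ((-(π * (t - x) ^ 2) : ℝ) : ℂ)) *
        cexp (-(2 * π * t * ξ : ℝ) * I)
      = cexp ((-(2 * π) - π * u * I) * t ^ 2 + (2 * π * x - 2 * π * ξ * I) * t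
          + -(π * x ^ 2)) := by
  rw [← exp_conj, conj_ofReal, ← Complex.exp_add, ← Complex.exp_add, ← Complex.exp_add]
  push_cast
  congr 1
  ring

theorem norm_neg_two_pi_sub_pi_mul_I (u : ℝ) :
    ‖(-(2 * π) - π * u * I : ℂ)‖ = π * √(4 + u ^ 2) := by
  have h : normSq (-(2 * π) - π * u * I) = π ^ 2 * (4 + u ^ 2) := by
    simp only [normSq_apply, sub_re, neg_re, mul_re, re_ofNat, ofReal_re, im_ofNat, ofReal_im,
      mul_zero, sub_zero, I_re, mul_im, zero_mul, add_zero, I_im, mul_one, sub_self, mul_neg,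
      neg_mul, neg_neg, sub_im, neg_im, neg_zero, zero_sub]
    ring
  rw [norm_def, h, Real.sqrt_mul (sq_nonneg _), Real.sqrt_sq pi_pos.le]

theorem inv_sqrt_rpow_half {a : ℝ} (ha : 0 ≤ a) : (√a)⁻¹ ^ (1 / 2 : ℝ) = a ^ (-(1 / 4 : ℝ)) := by
  rw [Real.sqrt_eq_rpow, ← Real.rpow_neg ha, ← Real.rpow_mul ha]
  norm_num

theorem re_chirped_gaussian_exponent (u x ξ : ℝ) :
    (-(π * x ^ 2) - (2 * π * x - 2 * π * ξ * I) ^ 2 / (4 * (-(2 * π) - π * u * I)) : ℂ).re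
      = -π * x ^ 2 / 2 + -2 * π * (ξ + u * x / 2) ^ 2 / (4 + u ^ 2) := by
  have h4u : (4 : ℝ) + u ^ 2 ≠ 0 := by positivity
  simp only [pow_two, sub_re, neg_re, mul_re, ofReal_re, ofReal_im, mul_zero, sub_zero, mul_im,
    zero_mul, add_zero, div_re, re_ofNat, im_ofNat, I_re, I_im, mul_one, sub_self, sub_im,
    zero_sub, mul_neg, neg_mul, neg_neg, neg_im, neg_zero, normSq_apply]
  field_simp
  ring

/-- For the Gaussian `φ(t) = e^{-π t²}` and the chirp `N_u φ(t) = e^{-iπ u t²} φ(t)`,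
the modulus of the short-time Fourier transform
`S_φ(N_u φ)(x,ξ) = ∫ (N_u φ)(t) φ(t-x) e^{-2πi tξ} dt` satisfies
`|S_φ(N_u φ)(x,ξ)| = (4+u²)^{-1/4} e^{-π x²/2} e^{-2π(ξ+ux/2)²/(4+u²)}`. -/
theorem stft_chirped_gaussian_abs (u x ξ : ℝ) :
    ‖∫ t : ℝ,
        (Complex.exp (-(Real.pi * u * t ^ 2 : ℝ) * Complex.I) *
            Complex.exp ((-(Real.pi * t ^ 2) : ℝ) : ℂ)) *
          (starRingEnd ℂ) (Complex.exp ((-(Real.pi * (t - x) ^ 2) : ℝ) : ℂ)) *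
          Complex.exp (-(2 * Real.pi * t * ξ : ℝ) * Complex.I)‖
      = (4 + u ^ 2) ^ (-(1 / 4 : ℝ)) * Real.exp (-Real.pi * x ^ 2 / 2) *
          Real.exp (-2 * Real.pi * (ξ + u * x / 2) ^ 2 / (4 + u ^ 2)) := by
  have hb : (-(2 * π) - π * u * I : ℂ).re < 0 := by simp [pi_pos]
  simp_rw [chirped_gaussian_stft_integrand_eq]
  rw [norm_integral_cexp_quadratic hb, norm_neg_two_pi_sub_pi_mul_I,
    div_mul_cancel_left₀ pi_ne_zero, inv_sqrt_rpow_half (by positivity),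
    re_chirped_gaussian_exponent, Real.exp_add, ← mul_assoc]
end

section
/- For 1 ≤ p < ∞, the L^p(ℝ²) norm of the short-time Fourier transform of the chirped Gaussian N_u φ with window φ equals c_p (4+u²)^{1/(2p) - 1/4}, where c_p = p^{-2/p}·(something independent of u); in particular ‖S_φ(N_u φ)‖_{L^p(ℝ²)} ≍ (1+|u|)^{1/p - 1/2} as |u| → ∞. -/
/-! The STFT of the chirped Gaussian is a Gaussian integral in `t`, so it has the closed form
`|S_φ(N_u φ)(x, ξ)| = (4 + u²)^{-1/4} e^{-π x² / 2} e^{-2π (ξ + u x / 2)² / (4 + u²)}`.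
After the measure-preserving shear `ξ ↦ ξ + u x / 2` its `p`-th power splits into two
one-dimensional Gaussians, and their integrals give `(4 + u²)^{1/2 - p/4} / p`. The asymptotics
follow because `4 + u²` and `(1 + |u|)²` agree up to a factor `4`. -/

open MeasureTheory

/-- The short-time Fourier transform of the chirped Gaussian `N_u φ` with
Gaussian window `φ(t) = e^{-π t²}`, where `N_u f(t) = e^{-iπ u t²} f(t)`. -/
noncomputable def stftChirpGauss (u x ξ : ℝ) : ℂ :=
  ∫ t : ℝ,
    (Complex.exp (-(Real.pi * u * t ^ 2 : ℝ) * Complex.I) *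
        Complex.exp ((-(Real.pi * t ^ 2) : ℝ) : ℂ)) *
      (starRingEnd ℂ) (Complex.exp ((-(Real.pi * (t - x) ^ 2) : ℝ) : ℂ)) *
      Complex.exp (-(2 * Real.pi * t * ξ : ℝ) * Complex.I)

open Real Complex

lemma stftChirpGauss_eq (u x ξ : ℝ) :
    stftChirpGauss u x ξ =
      (1 / (2 + u * I)) ^ (1 / 2 : ℂ) * cexp (π * (x - ξ * I) ^ 2 / (2 + u * I) - π * x ^ 2) := by
  have hb : (-(π * (2 + u * I)) : ℂ).re < 0 := by simp [pi_pos]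
  rw [stftChirpGauss]
  convert integral_cexp_quadratic hb (2 * π * (x - ξ * I)) (-(π * x ^ 2)) using 2
  · funext t
    rw [← exp_conj, conj_ofReal, ← Complex.exp_add, ← Complex.exp_add, ← Complex.exp_add]
    congr 1
    push_cast
    ring
  · congr 1
    field_simp
  · congr 1
    field_simp
    ring

lemma re_chirp_exponent (u x ξ : ℝ) :
    (π * (x - ξ * I) ^ 2 / (2 + u * I) - π * x ^ 2 : ℂ).re =
      -(π / 2) * x ^ 2 + -(2 * π / (4 + u ^ 2)) * (ξ + u / 2 * x) ^ 2 := by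
  have h4 : (2 * 2 + u * u : ℝ) ≠ 0 := by nlinarith [sq_nonneg u]
  simp only [pow_two, sub_re, div_re, mul_re, ofReal_re, I_re, mul_zero, ofReal_im, I_im, mul_one,
    sub_self, sub_zero, sub_im, mul_im, add_zero, zero_sub, mul_neg, neg_mul, neg_neg, zero_mul,
    add_re, re_ofNat, normSq_apply, add_im, im_ofNat, zero_add]
  field_simp
  ring

lemma norm_one_div_two_add_mul_I_cpow_half (u : ℝ) :
    ‖(1 / (2 + u * I)) ^ (1 / 2 : ℂ)‖ = (4 + u ^ 2) ^ (-(1 / 4) : ℝ) := by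
  have h4 : (0 : ℝ) < 4 + u ^ 2 := by positivity
  rw [show (1 / 2 : ℂ) = ((1 / 2 : ℝ) : ℂ) by norm_num, norm_cpow_real, norm_div, norm_one,
    show (2 : ℂ) = ((2 : ℝ) : ℂ) by norm_num, norm_add_mul_I,
    show (2 : ℝ) ^ 2 + u ^ 2 = 4 + u ^ 2 by norm_num, sqrt_eq_rpow, one_div, ← rpow_neg h4.le,
    ← rpow_mul h4.le]
  norm_num

lemma norm_stftChirpGauss (u x ξ : ℝ) :
    ‖stftChirpGauss u x ξ‖ = (4 + u ^ 2) ^ (-(1 / 4) : ℝ) *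
      (Real.exp (-(π / 2) * x ^ 2) * Real.exp (-(2 * π / (4 + u ^ 2)) * (ξ + u / 2 * x) ^ 2)) := by
  rw [stftChirpGauss_eq, norm_mul, norm_exp, re_chirp_exponent, Real.exp_add,
    norm_one_div_two_add_mul_I_cpow_half]

def shearEquiv (c : ℝ) : (ℝ × ℝ) ≃ᵐ (ℝ × ℝ) where
  toFun z := (z.1, z.2 + c * z.1)
  invFun z := (z.1, z.2 - c * z.1)
  left_inv z := by simp
  right_inv z := by simp
  measurable_toFun := measurable_fst.prodMk (by fun_prop)
  measurable_invFun := measurable_fst.prodMk (by fun_prop)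

lemma measurePreserving_shearEquiv (c : ℝ) :
    MeasurePreserving (shearEquiv c) := by
  rw [Measure.volume_eq_prod]
  exact (MeasurePreserving.id _).skew_product (by fun_prop)
    (Filter.Eventually.of_forall fun x ↦ map_add_right_eq_self _ (c * x))

lemma integral_gaussian_mul_gaussian_shear (a b c : ℝ) :
    ∫ z : ℝ × ℝ, Real.exp (-a * z.1 ^ 2) * Real.exp (-b * (z.2 + c * z.1) ^ 2) =
      √(π / a) * √(π / b) := by
  let g : ℝ × ℝ → ℝ := fun w ↦ Real.exp (-a * w.1 ^ 2) * Real.exp (-b * w.2 ^ 2)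
  calc _ = ∫ z : ℝ × ℝ, g (shearEquiv c z) := rfl
    _ = ∫ w : ℝ × ℝ, g w := (measurePreserving_shearEquiv c).integral_comp' g
    _ = √(π / a) * √(π / b) := by
      rw [Measure.volume_eq_prod, integral_prod_mul
        (fun x : ℝ ↦ Real.exp (-a * x ^ 2)) (fun y : ℝ ↦ Real.exp (-b * y ^ 2)), integral_gaussian,
        integral_gaussian]

lemma integral_norm_stftChirpGauss_rpow {p : ℝ} (hp : 0 < p) (u : ℝ) :
    ∫ z : ℝ × ℝ, ‖stftChirpGauss u z.1 z.2‖ ^ p = (4 + u ^ 2) ^ (1 / 2 - p / 4 : ℝ) / p := by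
  have h4 : (0 : ℝ) < 4 + u ^ 2 := by positivity
  have hpow : ∀ z : ℝ × ℝ, ‖stftChirpGauss u z.1 z.2‖ ^ p = (4 + u ^ 2) ^ (-(p / 4)) *
      (Real.exp (-(p * π / 2) * z.1 ^ 2) *
        Real.exp (-(2 * p * π / (4 + u ^ 2)) * (z.2 + u / 2 * z.1) ^ 2)) := by
    intro z
    rw [norm_stftChirpGauss, mul_rpow (by positivity) (by positivity),
      mul_rpow (by positivity) (by positivity), ← rpow_mul h4.le, ← Real.exp_mul, ← Real.exp_mul]
    ring_nf
  simp_rw [hpow]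
  rw [integral_const_mul, integral_gaussian_mul_gaussian_shear, ← sqrt_mul (by positivity),
    show π / (p * π / 2) * (π / (2 * p * π / (4 + u ^ 2))) = (4 + u ^ 2) / p ^ 2 by
      field_simp,
    sqrt_div' _ (by positivity), sqrt_sq hp.le, sqrt_eq_rpow, sub_eq_add_neg, rpow_add h4]
  ring

lemma integral_norm_stftChirpGauss_rpow_rpow_one_div {p : ℝ} (hp : 0 < p) (u : ℝ) :
    (∫ z : ℝ × ℝ, ‖stftChirpGauss u z.1 z.2‖ ^ p) ^ (1 / p) =
      (1 / p) ^ (1 / p) * (4 + u ^ 2) ^ (1 / (2 * p) - 1 / 4) := by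
  have h4 : (0 : ℝ) < 4 + u ^ 2 := by positivity
  rw [integral_norm_stftChirpGauss_rpow hp, div_eq_mul_one_div _ p, mul_comm,
    mul_rpow (by positivity) (by positivity), ← rpow_mul h4.le]
  congr 2
  field_simp

lemma rpow_le_rpow_mul_of_le_mul {s t K : ℝ} (hs : 0 < s) (ht : 0 < t) (hst : s ≤ K * t)
    (hts : t ≤ K * s) (α : ℝ) : s ^ α ≤ K ^ |α| * t ^ α := by
  have hK : 0 < K := pos_of_mul_pos_left (hs.trans_le hst) ht.le
  rcases le_total 0 α with hα | hα
  · rw [abs_of_nonneg hα, ← mul_rpow hK.le ht.le]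
    exact rpow_le_rpow hs.le hst hα
  · have hKs : K ^ α * s ^ α ≤ t ^ α := by
      rw [← mul_rpow hK.le hs.le]
      exact rpow_le_rpow_of_nonpos ht hts hα
    calc s ^ α = K ^ (-α) * (K ^ α * s ^ α) := by
          rw [← mul_assoc, ← rpow_add hK, neg_add_cancel, rpow_zero, one_mul]
      _ ≤ K ^ |α| * t ^ α := by
          rw [abs_of_nonpos hα]
          gcongr

/-- For `1 ≤ p < ∞` the `L^p(ℝ²)`-norm of `S_φ(N_u φ)` equals
`c_p (4+u²)^{1/(2p)-1/4}` for a constant `c_p > 0` independent of `u`;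
in particular it is comparable to `(1+|u|)^{1/p-1/2}`. -/
theorem stft_chirped_gaussian_Lp_norm (p : ℝ) (hp : 1 ≤ p) :
    (∃ c > 0, ∀ u : ℝ,
        (∫ z : ℝ × ℝ, ‖stftChirpGauss u z.1 z.2‖ ^ p) ^ (1 / p)
          = c * (4 + u ^ 2) ^ (1 / (2 * p) - 1 / 4)) ∧
    ∃ c₁ > 0, ∃ c₂ > 0, ∀ u : ℝ,
      c₁ * (1 + |u|) ^ (1 / p - 1 / 2)
          ≤ (∫ z : ℝ × ℝ, ‖stftChirpGauss u z.1 z.2‖ ^ p) ^ (1 / p) ∧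
        (∫ z : ℝ × ℝ, ‖stftChirpGauss u z.1 z.2‖ ^ p) ^ (1 / p)
          ≤ c₂ * (1 + |u|) ^ (1 / p - 1 / 2) := by
  have hp0 : 0 < p := by linarith
  set c : ℝ := (1 / p) ^ (1 / p)
  set β : ℝ := 1 / (2 * p) - 1 / 4
  have hc : 0 < c := by positivity
  refine ⟨⟨c, hc, integral_norm_stftChirpGauss_rpow_rpow_one_div hp0⟩,
    c / 4 ^ |β|, by positivity, c * 4 ^ |β|, by positivity, fun u ↦ ?_⟩
  have ht : 0 < (1 + |u|) ^ 2 := by positivity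
  have hs : (0 : ℝ) < 4 + u ^ 2 := by positivity
  have hst : 4 + u ^ 2 ≤ 4 * (1 + |u|) ^ 2 := by nlinarith [abs_nonneg u, sq_abs u]
  have hts : (1 + |u|) ^ 2 ≤ 4 * (4 + u ^ 2) := by nlinarith [abs_nonneg u, sq_abs u]
  have hexp : (1 + |u|) ^ (1 / p - 1 / 2) = ((1 + |u|) ^ 2) ^ β := by
    rw [← rpow_natCast, ← rpow_mul (by positivity)]
    congr 1
    simp only [β]
    field_simp
    ring
  rw [integral_norm_stftChirpGauss_rpow_rpow_one_div hp0, hexp]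
  constructor
  · rw [div_mul_eq_mul_div, div_le_iff₀ (by positivity), mul_assoc, mul_comm (_ ^ β)]
    exact mul_le_mul_of_nonneg_left (rpow_le_rpow_mul_of_le_mul ht hs hts hst β) hc.le
  · rw [mul_assoc]
    exact mul_le_mul_of_nonneg_left (rpow_le_rpow_mul_of_le_mul hs ht hst hts β) hc.le
end
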